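/- arXiv:2003.13603 — 2 statements merged into one kernel-verified Lean document; each statement's English description precedes it below -/
import Mathlib

section
/- The chain of strict inequalities 5/6 < G_n(−1) < H_n(−1) < 1 < H_n(1) < G_n(1) < 2 holds. -/
open Real

noncomputable def A (m : ℕ) : ℝ := (Nat.centralBinom m : ℝ) / 4 ^ m

noncomputable def c (n m : ℕ) : ℝ := A m / (2 * m * n + 1)

noncomputable def d (n m : ℕ) : ℝ := A m * ((n : ℝ) - 1) / ((n : ℝ) * (2 * m + 1) - 1)

noncomputable def H (n : ℕ) (z : ℂ) : ℂ := ∑' m : ℕ, (c n m : ℂ) * z ^ m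

noncomputable def G (n : ℕ) (z : ℂ) : ℂ := ∑' m : ℕ, (d n m : ℂ) * z ^ m

noncomputable def hh (n : ℕ) (z : ℂ) : ℂ := ∑' m : ℕ, (c n m : ℂ) * z ^ (2 * m * n + 1)

noncomputable def gg (n : ℕ) (z : ℂ) : ℂ :=
  (1 / ((n : ℂ) - 1)) * ∑' m : ℕ, (d n m : ℂ) * z ^ (2 * m * n + n - 1)

noncomputable def f (n : ℕ) (β : ℝ) (z : ℂ) : ℂ :=
  Complex.exp (Complex.I * β / 2) * hh n z +
    Complex.exp (-(Complex.I * β / 2)) * (starRingEnd ℂ) (gg n z)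

noncomputable def K (n : ℕ) : ℝ :=
  Real.sqrt π * Real.Gamma (1 + 1 / (2 * n)) / Real.Gamma (1 / 2 + 1 / (2 * n))

/-! The coefficients `A m` decrease, with `A m - A (m + 1) = A (m + 1) / (2m + 1)`. This
telescoping series dominates `d n (m + 1)` termwise and sums to at most `A 0 = 1`, which gives
summability and `G_n(1) < 2`. As `c n` and `d n` decrease, each alternating sum lies between the
partial sums `a₀ - a₁` and `a₀ - a₁ + a₂` (Leibniz).

For `G_n(-1) < H_n(-1)` write `d n m - c n m = A m (n - 2) φ(2mn)` with
`φ x = x / ((x + n - 1)(x + 1))`. Since `φ` decreases once `x² ≥ n - 1`, the gaps decrease from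
`m = 1` on; the gap vanishes at `m = 0`, so `G_n(-1) - H_n(-1)` is minus an alternating series
with decreasing terms, whose sum is at least the positive `gap₁ - gap₂`. -/

open Finset

lemma A_pos (m : ℕ) : 0 < A m :=
  div_pos (by exact_mod_cast m.centralBinom_pos) (by positivity)

lemma A_zero : A 0 = 1 := by simp [A]

lemma A_one : A 1 = 1 / 2 := by norm_num [A, Nat.centralBinom, Nat.choose]

lemma A_succ (m : ℕ) : A (m + 1) = A m * (2 * m + 1) / (2 * m + 2) := by
  have h : ((m : ℝ) + 1) * Nat.centralBinom (m + 1) = 2 * (2 * m + 1) * Nat.centralBinom m := by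
    exact_mod_cast Nat.succ_mul_centralBinom_succ m
  rw [A, A, eq_div_iff (by positivity), pow_succ]
  field_simp
  linear_combination 2 * h

lemma A_succ_lt (m : ℕ) : A (m + 1) < A m := by
  rw [A_succ, div_lt_iff₀ (by positivity)]
  nlinarith [A_pos m]

lemma A_sub_A_succ (m : ℕ) : A m - A (m + 1) = A (m + 1) / (2 * m + 1) := by
  rw [A_succ]
  field_simp
  ring

lemma sum_range_A_sub_A_succ_le_one (N : ℕ) : ∑ m ∈ range N, (A m - A (m + 1)) ≤ 1 := by
  rw [sum_range_sub' A N, A_zero]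
  linarith [A_pos N]

lemma summable_A_sub_A_succ : Summable fun m => A m - A (m + 1) :=
  summable_of_sum_range_le (fun m => sub_nonneg.2 (A_succ_lt m).le) sum_range_A_sub_A_succ_le_one

lemma tsum_A_sub_A_succ_le_one : ∑' m, (A m - A (m + 1)) ≤ 1 :=
  Real.tsum_le_of_sum_range_le (fun m => sub_nonneg.2 (A_succ_lt m).le)
    sum_range_A_sub_A_succ_le_one

section Alternating

variable {E : Type*} [CommRing E] [UniformSpace E] [IsUniformAddGroup E] [CompleteSpace E]
  {f : ℕ → E}

lemma Summable.mul_neg_one_pow (hfs : Summable f) : Summable fun m => f m * (-1) ^ m := by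
  simpa only [mul_comm (f _)] using hfs.alternating

lemma Summable.tsum_mul_neg_one_pow_eq_sub [T2Space E] (hfs : Summable f) :
    ∑' m, f m * (-1) ^ m = f 0 - ∑' m, f (m + 1) * (-1) ^ m := by
  rw [hfs.mul_neg_one_pow.tsum_eq_zero_add, sub_eq_add_neg, ← tsum_neg]
  simp [pow_succ]

variable [LinearOrder E] [IsOrderedRing E] [OrderClosedTopology E]

lemma Antitone.sub_le_tsum_mul_neg_one_pow (hfa : Antitone f) (hfs : Summable f) :
    f 0 - f 1 ≤ ∑' m, f m * (-1) ^ m := by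
  have h := hfa.alternating_series_le_tendsto hfs.tendsto_alternating_series_tsum 1
  simp only [sum_range_succ, sum_range_zero] at h
  simp_rw [mul_comm (f _)]
  simpa [sub_eq_add_neg] using h

lemma Antitone.tsum_mul_neg_one_pow_le (hfa : Antitone f) (hfs : Summable f) :
    ∑' m, f m * (-1) ^ m ≤ f 0 - f 1 + f 2 := by
  have h := hfa.tendsto_le_alternating_series hfs.tendsto_alternating_series_tsum 1
  simp only [sum_range_succ, sum_range_zero] at h
  simp_rw [mul_comm (f _)]
  simpa [sub_eq_add_neg] using h

end Alternating

lemma c_zero (n : ℕ) : c n 0 = 1 := by simp [c, A_zero]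

lemma c_pos (n m : ℕ) : 0 < c n m := div_pos (A_pos m) (by positivity)

lemma c_succ_lt (n m : ℕ) : c n (m + 1) < c n m := by
  unfold c
  apply div_lt_div₀ (A_succ_lt m) _ (A_pos m).le (by positivity)
  push_cast
  nlinarith [Nat.cast_nonneg (α := ℝ) n]

lemma c_antitone (n : ℕ) : Antitone (c n) :=
  antitone_nat_of_succ_le fun m => (c_succ_lt n m).le

section

variable {n : ℕ}

lemma d_zero (hn : 2 ≤ n) : d n 0 = 1 := by
  have : (2 : ℝ) ≤ n := by exact_mod_cast hn
  have : (n : ℝ) - 1 ≠ 0 := by linarith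
  simp [d, A_zero, this]

lemma d_nonneg (hn : 1 ≤ n) (m : ℕ) : 0 ≤ d n m := by
  have : (1 : ℝ) ≤ n := by exact_mod_cast hn
  unfold d
  apply div_nonneg (mul_nonneg (A_pos m).le (by linarith))
  nlinarith [Nat.cast_nonneg (α := ℝ) m]

lemma d_succ_lt (hn : 2 ≤ n) (m : ℕ) : d n (m + 1) < d n m := by
  have : (2 : ℝ) ≤ n := by exact_mod_cast hn
  unfold d
  apply div_lt_div₀ (mul_lt_mul_of_pos_right (A_succ_lt m) (by linarith)) _
    (mul_nonneg (A_pos m).le (by linarith)) (by nlinarith [Nat.cast_nonneg (α := ℝ) m])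
  push_cast
  nlinarith

lemma d_antitone (hn : 2 ≤ n) : Antitone (d n) :=
  antitone_nat_of_succ_le fun m => (d_succ_lt hn m).le

lemma d_one_lt (hn : 1 ≤ n) : d n 1 < 1 / 6 := by
  have : (1 : ℝ) ≤ n := by exact_mod_cast hn
  rw [d, A_one, div_lt_iff₀ (by push_cast; linarith)]
  push_cast
  linarith

lemma d_succ_lt_A_sub_A_succ (hn : 1 ≤ n) (m : ℕ) : d n (m + 1) < A m - A (m + 1) := by
  have : (1 : ℝ) ≤ n := by exact_mod_cast hn
  rw [A_sub_A_succ, d, div_lt_div_iff₀ (by push_cast; nlinarith [Nat.cast_nonneg (α := ℝ) m])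
    (by positivity)]
  push_cast
  nlinarith [A_pos (m + 1), Nat.cast_nonneg (α := ℝ) m]

lemma summable_d (hn : 1 ≤ n) : Summable (d n) :=
  (summable_nat_add_iff 1).1 <| summable_A_sub_A_succ.of_nonneg_of_le (fun _ => d_nonneg hn _)
    fun m => (d_succ_lt_A_sub_A_succ hn m).le

end

lemma div_mul_add_one_le_of_le {a x y : ℝ} (ha : 0 ≤ a) (hx : 0 < x) (hxy : x ≤ y)
    (haxy : a ≤ x * y) : y / ((y + a) * (y + 1)) ≤ x / ((x + a) * (x + 1)) := by
  have hy : 0 < y := hx.trans_le hxy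
  rw [div_le_div_iff₀ (by positivity) (by positivity)]
  nlinarith [mul_nonneg (sub_nonneg.2 hxy) (sub_nonneg.2 haxy)]

section

variable {n : ℕ}

lemma d_sub_c (hn : 2 ≤ n) (m : ℕ) :
    d n m - c n m =
      A m * (n - 2) * (2 * m * n / ((2 * m * n + (n - 1)) * (2 * m * n + 1))) := by
  have : (2 : ℝ) ≤ n := by exact_mod_cast hn
  have : (0 : ℝ) ≤ 2 * m * n := by positivity
  have : (2 * m * n + (n - 1) : ℝ) ≠ 0 := by linarith
  rw [d, c, show (n : ℝ) * (2 * m + 1) - 1 = 2 * m * n + (n - 1) by ring,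
    div_sub_div _ _ this (by positivity), ← mul_div_assoc,
    div_left_inj' (mul_ne_zero this (by positivity))]
  ring

lemma c_le_d (hn : 2 ≤ n) (m : ℕ) : c n m ≤ d n m := by
  have : (2 : ℝ) ≤ n := by exact_mod_cast hn
  have : (0 : ℝ) ≤ 2 * m * n := by positivity
  rw [← sub_nonneg, d_sub_c hn]
  exact mul_nonneg (mul_nonneg (A_pos m).le (by linarith))
    (div_nonneg (by positivity) (mul_nonneg (by linarith) (by positivity)))

lemma c_lt_d (hn : 3 ≤ n) {m : ℕ} (hm : 0 < m) : c n m < d n m := by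
  have : (3 : ℝ) ≤ n := by exact_mod_cast hn
  have : (0 : ℝ) < 2 * m * n := by positivity
  rw [← sub_pos, d_sub_c (by omega)]
  exact mul_pos (mul_pos (A_pos m) (by linarith))
    (div_pos (by positivity) (mul_pos (by linarith) (by positivity)))

lemma d_sub_c_succ_lt (hn : 3 ≤ n) {m : ℕ} (hm : 1 ≤ m) :
    d n (m + 1) - c n (m + 1) < d n m - c n m := by
  have hn' : (3 : ℝ) ≤ n := by exact_mod_cast hn
  have hm' : (1 : ℝ) ≤ m := by exact_mod_cast hm
  set x : ℝ := 2 * m * n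
  set y : ℝ := 2 * (m + 1) * n
  have hx : 6 ≤ x := by nlinarith
  have hxy : x ≤ y := by nlinarith
  have hφy : 0 < y / ((y + (n - 1)) * (y + 1)) :=
    div_pos (by linarith) (mul_pos (by linarith) (by linarith))
  have hφ : y / ((y + (n - 1)) * (y + 1)) ≤ x / ((x + (n - 1)) * (x + 1)) :=
    div_mul_add_one_le_of_le (by linarith) (by linarith) hxy (by nlinarith)
  rw [d_sub_c (by omega), d_sub_c (by omega)]
  push_cast
  calc A (m + 1) * (n - 2) * (y / ((y + (n - 1)) * (y + 1)))
      < A m * (n - 2) * (y / ((y + (n - 1)) * (y + 1))) := by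
        gcongr
        · linarith
        · exact A_succ_lt m
    _ ≤ A m * (n - 2) * (x / ((x + (n - 1)) * (x + 1))) := by
        gcongr
        exact mul_nonneg (A_pos m).le (by linarith)

lemma antitone_d_sub_c_succ (hn : 3 ≤ n) : Antitone fun m => d n (m + 1) - c n (m + 1) :=
  antitone_nat_of_succ_le fun m => (d_sub_c_succ_lt hn (Nat.le_add_left 1 m)).le

end

section

variable {n : ℕ}

lemma summable_c (hn : 2 ≤ n) : Summable (c n) :=
  (summable_d (by omega)).of_nonneg_of_le (fun m => (c_pos n m).le) (c_le_d hn)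

lemma five_div_six_lt_tsum_d_mul_neg_one_pow (hn : 2 ≤ n) :
    5 / 6 < ∑' m, d n m * (-1) ^ m := by
  have h := (d_antitone hn).sub_le_tsum_mul_neg_one_pow (summable_d (by omega))
  linarith [d_zero hn, d_one_lt (n := n) (by omega)]

lemma tsum_d_mul_neg_one_pow_lt_tsum_c_mul_neg_one_pow (hn : 3 ≤ n) :
    ∑' m, d n m * (-1) ^ m < ∑' m, c n m * (-1) ^ m := by
  have hd := summable_d (n := n) (by omega)
  have hc := summable_c (n := n) (by omega)
  have hdc : Summable fun m => d n m - c n m := hd.sub hc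
  have hsplit : ∑' m, d n m * (-1) ^ m - ∑' m, c n m * (-1) ^ m
      = -∑' m, (d n (m + 1) - c n (m + 1)) * (-1) ^ m := by
    rw [← hd.mul_neg_one_pow.tsum_sub hc.mul_neg_one_pow]
    simp_rw [← sub_mul]
    rw [hdc.tsum_mul_neg_one_pow_eq_sub, d_zero (by omega), c_zero, sub_self, zero_sub]
  have h := (antitone_d_sub_c_succ hn).sub_le_tsum_mul_neg_one_pow
    ((summable_nat_add_iff 1).2 hdc)
  linarith [d_sub_c_succ_lt hn le_rfl]

lemma tsum_c_mul_neg_one_pow_lt_one (hn : 2 ≤ n) : ∑' m, c n m * (-1) ^ m < 1 := by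
  have h := (c_antitone n).tsum_mul_neg_one_pow_le (summable_c hn)
  linarith [c_zero n, c_succ_lt n 1]

lemma one_lt_tsum_c (hn : 2 ≤ n) : 1 < ∑' m, c n m := by
  have hc := summable_c hn
  rw [hc.tsum_eq_zero_add, c_zero, lt_add_iff_pos_right]
  exact ((summable_nat_add_iff 1).2 hc).tsum_pos (fun m => (c_pos n _).le) 0 (c_pos n 1)

lemma tsum_c_lt_tsum_d (hn : 3 ≤ n) : ∑' m, c n m < ∑' m, d n m :=
  (summable_c (by omega)).tsum_lt_tsum (c_le_d (by omega)) (c_lt_d hn one_pos)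
    (summable_d (by omega))

lemma tsum_d_lt_two (hn : 2 ≤ n) : ∑' m, d n m < 2 := by
  have hd := summable_d (n := n) (by omega)
  have h : ∑' m, d n (m + 1) < ∑' m, (A m - A (m + 1)) :=
    ((summable_nat_add_iff 1).2 hd).tsum_lt_tsum
      (fun m => (d_succ_lt_A_sub_A_succ (by omega) m).le)
      (d_succ_lt_A_sub_A_succ (by omega) 0) summable_A_sub_A_succ
  rw [hd.tsum_eq_zero_add, d_zero hn]
  linarith [tsum_A_sub_A_succ_le_one]

end

theorem stmt_3 (n : ℕ) (hn : 3 ≤ n) :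
    5 / 6 < (∑' m : ℕ, d n m * (-1 : ℝ) ^ m) ∧
    (∑' m : ℕ, d n m * (-1 : ℝ) ^ m) < (∑' m : ℕ, c n m * (-1 : ℝ) ^ m) ∧
    (∑' m : ℕ, c n m * (-1 : ℝ) ^ m) < 1 ∧
    (1 : ℝ) < (∑' m : ℕ, c n m) ∧
    (∑' m : ℕ, c n m) < (∑' m : ℕ, d n m) ∧
    (∑' m : ℕ, d n m) < 2 := by
  have hn₂ : 2 ≤ n := by omega
  exact ⟨five_div_six_lt_tsum_d_mul_neg_one_pow hn₂,
    tsum_d_mul_neg_one_pow_lt_tsum_c_mul_neg_one_pow hn, tsum_c_mul_neg_one_pow_lt_one hn₂,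
    one_lt_tsum_c hn₂, tsum_c_lt_tsum_d hn, tsum_d_lt_two hn₂⟩
end

section
/- For every complex z with |z| < 1, the functions h_n and g_n are complex-differentiable at z with h_n′(z) = 1/√(1 − z^{2n}) and g_n′(z) = z^{n−2}/√(1 − z^{2n}), where √ denotes the principal complex square root (well defined since Re(1 − z^{2n}) > 0). In particular g_n′(z) = z^{n−2} · h_n′(z), i.e. the analytic dilatation of every rosette harmonic mapping f_β is ω(z) = z^{n−2}. -/
open Real

/-! Since `A m = (m - 1/2).choose m`, the series `∑ A m w ^ m` is the binomial series of
`(1 - w) ^ (-1/2)`. The coefficients of `h_n` and `g_n` are chosen so that termwise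
differentiation cancels their denominators: `c m (2mn + 1) = A m` and
`d m (2mn + n - 1) = (n - 1) A m`. Hence `h_n' z = ∑ A m z ^ (2mn) = (1 - z ^ (2n)) ^ (-1/2)` and
`g_n' z = z ^ (n - 2) h_n' z`. -/

lemma ascPochhammer_eval_half {𝕂 : Type*} [Field 𝕂] [CharZero 𝕂] (m : ℕ) :
    (ascPochhammer 𝕂 m).eval (1 / 2) = m.factorial * (m.centralBinom / 4 ^ m : 𝕂) := by
  induction m with
  | zero => simp
  | succ m ih =>
    have hrec : ((m : 𝕂) + 1) * (Nat.centralBinom (m + 1) : 𝕂) =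
        2 * (2 * m + 1) * Nat.centralBinom m := by
      exact_mod_cast Nat.succ_mul_centralBinom_succ m
    rw [ascPochhammer_succ_eval, ih, Nat.factorial_succ, pow_succ]
    push_cast
    field_simp
    linear_combination (-2 : 𝕂) * m.factorial * hrec

lemma ringChoose_half_add_sub_one {𝕂 : Type*} [Field 𝕂] [CharZero 𝕂] (m : ℕ) :
    Ring.choose ((1 / 2 : 𝕂) + m - 1) m = m.centralBinom / 4 ^ m := by
  have h := Ring.factorial_nsmul_multichoose_eq_ascPochhammer (1 / 2 : 𝕂) m
  rw [Polynomial.ascPochhammer_smeval_eq_eval, ascPochhammer_eval_half, nsmul_eq_mul,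
    Ring.multichoose_eq] at h
  exact mul_left_cancel₀ (by exact_mod_cast m.factorial_ne_zero) h

lemma hasSum_A_mul_pow {w : ℂ} (hw : ‖w‖ < 1) :
    HasSum (fun m => (A m : ℂ) * w ^ m) ((1 - w) ^ (-(1 / 2) : ℂ)) := by
  have h := (Complex.one_div_one_sub_cpow_hasFPowerSeriesOnBall_zero (1 / 2)).hasSum
    (y := w) (by simpa [← ofReal_norm] using hw)
  simp only [FormalMultilinearSeries.ofScalars_apply_eq, ringChoose_half_add_sub_one, zero_add,
    smul_eq_mul] at h
  simpa only [A, Complex.ofReal_div, Complex.ofReal_natCast, Complex.ofReal_pow,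
    Complex.ofReal_ofNat, mul_comm, one_div, Complex.cpow_neg] using h

lemma hasDerivAt_tsum_mul_pow {𝕜 : Type*} [RCLike 𝕜] {a b : ℕ → 𝕜} {e : ℕ → ℕ} {C : ℝ}
    (he : ∀ m, m ≤ e m) (hab : ∀ m, a m * e m = b m) (hb : ∀ m, ‖b m‖ ≤ C) {z : 𝕜}
    (hz : ‖z‖ < 1) :
    HasDerivAt (fun y => ∑' m, a m * y ^ e m) (∑' m, b m * z ^ (e m - 1)) z := by
  set R := (‖z‖ + 1) / 2 with hR
  have hR0 : 0 < R := by positivity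
  have hR1 : R < 1 := by linarith [hR]
  have hC : 0 ≤ C := (norm_nonneg _).trans (hb 0)
  have hu : Summable fun m => C * R ^ (m - 1) :=
    (summable_nat_add_iff 1).mp <| by
      simpa using (summable_geometric_of_lt_one hR0.le hR1).mul_left C
  have hzR : z ∈ Metric.ball (0 : 𝕜) R := by simpa using (by linarith [hR] : ‖z‖ < R)
  refine hasDerivAt_tsum_of_isPreconnected (g := fun m y => a m * y ^ e m)
    (g' := fun m y => b m * y ^ (e m - 1)) hu Metric.isOpen_ball
    (convex_ball (0 : 𝕜) R).isPreconnected (fun m y _ => ?_) (fun m y hy => ?_)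
    (Metric.mem_ball_self hR0) ?_ hzR
  · simpa only [← hab, mul_assoc] using (hasDerivAt_pow (e m) y).const_mul (a m)
  · have hy : ‖y‖ ≤ R := by simpa using (Metric.mem_ball.mp hy).le
    rw [norm_mul, norm_pow]
    exact mul_le_mul (hb m) ((pow_le_pow_left₀ (norm_nonneg y) hy _).trans
      (pow_le_pow_of_le_one hR0.le hR1.le (by have := he m; omega))) (by positivity) hC
  · refine summable_of_ne_finset_zero (s := {0}) fun m hm => ?_
    have : e m ≠ 0 := by have := he m; simp at hm; omega
    simp [zero_pow this]

lemma A_le_one (m : ℕ) : A m ≤ 1 := by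
  rw [A, div_le_one (by positivity)]
  exact_mod_cast Nat.centralBinom_le_four_pow m

lemma norm_A_le_one (m : ℕ) : ‖(A m : ℂ)‖ ≤ 1 := by
  rw [Complex.norm_real, Real.norm_of_nonneg (by unfold A; positivity)]
  exact A_le_one m

lemma c_mul_exponent (n m : ℕ) : (c n m : ℂ) * ((2 * m * n + 1 : ℕ) : ℂ) = A m := by
  have : (2 * m * n + 1 : ℂ) ≠ 0 := by exact_mod_cast (2 * m * n).succ_ne_zero
  simp only [c]
  push_cast
  field_simp

lemma d_mul_exponent {n : ℕ} (hn : 2 ≤ n) (m : ℕ) :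
    (d n m : ℂ) * ((2 * m * n + n - 1 : ℕ) : ℂ) = A m * (n - 1) := by
  have hn' : (2 : ℝ) ≤ n := by exact_mod_cast hn
  have : (n * (2 * m + 1) - 1 : ℝ) ≠ 0 := by nlinarith
  have : (n * (2 * m + 1) - 1 : ℂ) ≠ 0 := by exact_mod_cast this
  rw [Nat.cast_sub (by omega)]
  simp only [d]
  push_cast
  field_simp

lemma norm_pow_lt_one {𝕜 : Type*} [NormedDivisionRing 𝕜] {z : 𝕜} (hz : ‖z‖ < 1) {k : ℕ} (hk : k ≠ 0) : ‖z ^ k‖ < 1 := by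
  rw [norm_pow]
  exact pow_lt_one₀ (norm_nonneg z) hz hk

lemma hasDerivAt_hh {n : ℕ} (hn : n ≠ 0) {z : ℂ} (hz : ‖z‖ < 1) :
    HasDerivAt (hh n) ((1 - z ^ (2 * n)) ^ (-(1 / 2) : ℂ)) z := by
  refine (hasDerivAt_tsum_mul_pow (a := fun m => (c n m : ℂ)) (e := fun m => 2 * m * n + 1)
    (fun m => Nat.le_succ_of_le (by nlinarith [Nat.pos_of_ne_zero hn])) (c_mul_exponent n)
    norm_A_le_one hz).congr_deriv ?_
  rw [← (hasSum_A_mul_pow (norm_pow_lt_one hz (by omega))).tsum_eq]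
  congr! 2 with m
  rw [← pow_mul, Nat.add_sub_cancel, mul_right_comm]

lemma hasDerivAt_gg {n : ℕ} (hn : 2 ≤ n) {z : ℂ} (hz : ‖z‖ < 1) :
    HasDerivAt (gg n) (z ^ (n - 2) * (1 - z ^ (2 * n)) ^ (-(1 / 2) : ℂ)) z := by
  refine ((hasDerivAt_tsum_mul_pow (a := fun m => (d n m : ℂ)) (e := fun m => 2 * m * n + n - 1)
    (fun m => Nat.le_sub_of_add_le (by nlinarith)) (d_mul_exponent hn)
    (fun m => (norm_mul _ _).trans_le (mul_le_of_le_one_left (norm_nonneg _) (norm_A_le_one m)))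
    hz).const_mul (1 / ((n : ℂ) - 1))).congr_deriv ?_
  have hn1 : (n : ℂ) - 1 ≠ 0 := by
    rw [sub_ne_zero]; exact_mod_cast (by omega : n ≠ 1)
  rw [← (hasSum_A_mul_pow (norm_pow_lt_one hz (by omega))).tsum_eq, ← tsum_mul_left,
    ← tsum_mul_left]
  congr 1 with m
  rw [show 2 * m * n + n - 1 - 1 = 2 * n * m + (n - 2) by
    rw [mul_right_comm]; omega, pow_add, pow_mul]
  field_simp
theorem stmt_6 (n : ℕ) (hn : 3 ≤ n) (z : ℂ) (hz : ‖z‖ < 1) :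
    0 < (1 - z ^ (2 * n)).re ∧
    HasDerivAt (hh n) ((1 - z ^ (2 * n)) ^ (-(1 / 2) : ℂ)) z ∧
    HasDerivAt (gg n) (z ^ (n - 2) * (1 - z ^ (2 * n)) ^ (-(1 / 2) : ℂ)) z ∧
    deriv (gg n) z = z ^ (n - 2) * deriv (hh n) z := by
  have hh' := hasDerivAt_hh (by omega : n ≠ 0) hz
  have hg' := hasDerivAt_gg (by omega : 2 ≤ n) hz
  refine ⟨?_, hh', hg', by rw [hh'.deriv, hg'.deriv]⟩
  rw [Complex.sub_re, Complex.one_re, sub_pos]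
  exact (Complex.re_le_norm _).trans_lt (norm_pow_lt_one hz (by omega))
end
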